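/- For a strictly positive matrix A ∈ R^{n×n}, the Birkhoff projective diameter Δ(A) = sup over strictly positive x, y of d_H(Ax, Ay) is finite, bounded by max over i,j,k,l of log( (A_{ik} A_{jl}) / (A_{jk} A_{il}) ). -/

import Mathlib

/-!
Write `r = Ax / Ay` coordinatewise, so that `d_H(Ax, Ay)` is the logarithm of `r i / r j` for a
maximising row `i` and a minimising row `j`. Expanding both products,
`(Ax)_i (Ay)_j = ∑ₖₗ A_ik A_jl x_k y_l` and `(Ax)_j (Ay)_i = ∑ₖₗ A_jk A_il x_k y_l`, and comparing
them term by term shows that `r i / r j` is at most the largest cross ratio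
`A_ik A_jl / (A_jk A_il)` of the two rows.
-/

/-- Hilbert's projective metric on the positive orthant of `ℝⁿ`. -/
noncomputable def dH {n : ℕ} (x y : Fin n → ℝ) : ℝ :=
  Real.log ((⨆ i, x i / y i) / (⨅ i, x i / y i))

open Matrix

theorem dH_le_of_forall_log_div_le {n : ℕ} [Nonempty (Fin n)] {x y : Fin n → ℝ} {D : ℝ}
    (h : ∀ i j, Real.log ((x i / y i) / (x j / y j)) ≤ D) : dH x y ≤ D := by
  obtain ⟨i, hi⟩ := exists_eq_ciSup_of_finite (f := fun i => x i / y i)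
  obtain ⟨j, hj⟩ := exists_eq_ciInf_of_finite (f := fun i => x i / y i)
  rw [dH, ← hi, ← hj]
  exact h i j

section MulVec

variable {m ι : Type*} [Fintype ι]

theorem mulVec_pos [Nonempty ι] {A : Matrix m ι ℝ} (hA : ∀ i j, 0 < A i j) {x : ι → ℝ}
    (hx : ∀ i, 0 < x i) (i : m) : 0 < (A *ᵥ x) i :=
  Finset.sum_pos (fun j _ => mul_pos (hA i j) (hx j)) Finset.univ_nonempty

theorem mulVec_mul_mulVec_le_of_cross_le {A : Matrix m ι ℝ} {x y : ι → ℝ}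
    (hx : ∀ k, 0 ≤ x k) (hy : ∀ l, 0 ≤ y l) {a b : m} {M : ℝ}
    (hM : ∀ k l, A a k * A b l ≤ M * (A b k * A a l)) :
    (A *ᵥ x) a * (A *ᵥ y) b ≤ M * ((A *ᵥ x) b * (A *ᵥ y) a) := by
  simp only [mulVec, dotProduct]
  rw [Finset.sum_mul_sum, Finset.sum_mul_sum, Finset.mul_sum]
  refine Finset.sum_le_sum fun k _ => ?_
  rw [Finset.mul_sum]
  refine Finset.sum_le_sum fun l _ => ?_
  calc A a k * x k * (A b l * y l) = (A a k * A b l) * (x k * y l) := by ring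
    _ ≤ (M * (A b k * A a l)) * (x k * y l) :=
      mul_le_mul_of_nonneg_right (hM k l) (mul_nonneg (hx k) (hy l))
    _ = M * (A b k * x k * (A a l * y l)) := by ring

theorem exists_mulVec_div_div_le_cross [Nonempty ι] {A : Matrix m ι ℝ}
    (hA : ∀ i j, 0 < A i j) {x y : ι → ℝ} (hx : ∀ i, 0 < x i) (hy : ∀ i, 0 < y i)
    (i j : m) :
    ∃ k l, ((A *ᵥ x) i / (A *ᵥ y) i) / ((A *ᵥ x) j / (A *ᵥ y) j) ≤
      A i k * A j l / (A j k * A i l) := by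
  obtain ⟨⟨k, l⟩, hkl⟩ :=
    Finite.exists_max fun p : ι × ι => A i p.1 * A j p.2 / (A j p.1 * A i p.2)
  refine ⟨k, l, ?_⟩
  have hcross : ∀ k' l', A i k' * A j l' ≤
      A i k * A j l / (A j k * A i l) * (A j k' * A i l') := fun k' l' =>
    (div_le_iff₀ (mul_pos (hA j k') (hA i l'))).1 (hkl (k', l'))
  have hprod := mulVec_mul_mulVec_le_of_cross_le (fun k => (hx k).le) (fun l => (hy l).le) hcross
  rw [div_div_div_eq, div_le_iff₀ (mul_pos (mulVec_pos hA hy i) (mulVec_pos hA hx j))]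
  linarith

end MulVec

/-- The Birkhoff projective diameter of a strictly positive matrix is finite,
bounded by the max of log((A i k * A j l)/(A j k * A i l)) over all i, j, k, l. -/
theorem projective_diameter_bound {n : ℕ} (hn : 0 < n)
    (A : Matrix (Fin n) (Fin n) ℝ) (hA : ∀ i j, 0 < A i j)
    (x y : Fin n → ℝ) (hx : ∀ i, 0 < x i) (hy : ∀ i, 0 < y i) :
    dH (A.mulVec x) (A.mulVec y) ≤
      ⨆ p : Fin n × Fin n × Fin n × Fin n,
        Real.log ((A p.1 p.2.2.1 * A p.2.1 p.2.2.2) /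
          (A p.2.1 p.2.2.1 * A p.1 p.2.2.2)) := by
  have : Nonempty (Fin n) := ⟨⟨0, hn⟩⟩
  refine dH_le_of_forall_log_div_le fun i j => ?_
  obtain ⟨k, l, hkl⟩ := exists_mulVec_div_div_le_cross hA hx hy i j
  have hratio := div_pos (div_pos (mulVec_pos hA hx i) (mulVec_pos hA hy i))
    (div_pos (mulVec_pos hA hx j) (mulVec_pos hA hy j))
  exact le_ciSup_of_le (Finite.bddAbove_range _) (i, j, k, l) (Real.log_le_log hratio hkl)
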